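/- Let p and q be distinct odd primes. Then Z(pq) = ∑_{i+j+k=pq, i,j,k ∈ P_p} 1/(ijk) - 3 ∑_{a=1}^{p-1} (1/((p-a)q)) ∑_{i+j=aq, (ij,p)=1} 1/(ij) + 2 ∑_{a+b+c=p, a,b,c ∈ P_p} 1/(aq·bq·cq), where all sums are over ordered tuples of positive integers, i, j, k (respectively a, b, c) range over positive integers coprime to p with the indicated sum, and in the middle sum (i, j) ranges over ordered pairs of positive integers with i + j = aq and ij coprime to p. -/

import Mathlib

/-!
For `i + j + k = pq` the triple is coprime to `pq` iff it is coprime to `p` and `q` divides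
none of `i, j, k`. Since `q ∣ i + j + k`, `q` dividing two of them forces the third, so
inclusion–exclusion over the three conditions `q ∣ i`, `q ∣ j`, `q ∣ k` leaves
`1 - [q ∣ i] - [q ∣ j] - [q ∣ k] + 2 [q ∣ i, j, k]`. The three single terms agree by symmetry;
writing `i = aq`, the remaining pair has `j + k = (p - a)q`, which after `a ↦ p - a` is the
middle term. Triples divisible by `q` throughout are `q` times triples summing to `p`.
-/

open Finset

/-- `Z n = ∑_{i+j+k=n, i,j,k coprime to n} 1/(ijk)` over ordered triples of
positive integers. -/
def Z (n : ℕ) : ℚ :=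
  ∑ i ∈ Finset.Icc 1 n, ∑ j ∈ Finset.Icc 1 n, ∑ k ∈ Finset.Icc 1 n,
    if i + j + k = n ∧ Nat.Coprime i n ∧ Nat.Coprime j n ∧ Nat.Coprime k n then
      1 / ((i : ℚ) * j * k)
    else 0

/-- `Zp n p = ∑_{i+j+k=n, i,j,k coprime to p} 1/(ijk)` over ordered triples of
positive integers coprime to `p`. -/
def Zp (n p : ℕ) : ℚ :=
  ∑ i ∈ Finset.Icc 1 n, ∑ j ∈ Finset.Icc 1 n, ∑ k ∈ Finset.Icc 1 n,
    if i + j + k = n ∧ Nat.Coprime i p ∧ Nat.Coprime j p ∧ Nat.Coprime k p then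
      1 / ((i : ℚ) * j * k)
    else 0

lemma sum_Icc_mul_ite_dvd {M : Type*} [AddCommMonoid M] {q : ℕ} (hq : 0 < q) (n : ℕ)
    (g : ℕ → M) : ∑ i ∈ Icc 1 (n * q), (if q ∣ i then g i else 0) = ∑ a ∈ Icc 1 n, g (a * q) := by
  rw [← sum_filter, show (Icc 1 (n * q)).filter (q ∣ ·) = (Icc 1 n).image (· * q) from ?_,
    sum_image fun a _ b _ h => Nat.eq_of_mul_eq_mul_right hq h]
  ext i
  simp only [mem_filter, mem_image, mem_Icc]
  constructor
  · rintro ⟨⟨hi, hin⟩, a, rfl⟩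
    refine ⟨a, ⟨Nat.pos_of_ne_zero ?_,
      Nat.le_of_mul_le_mul_right (by rwa [mul_comm q a] at hin) hq⟩, mul_comm a q⟩
    rintro rfl
    simp at hi
  · rintro ⟨a, ⟨ha, han⟩, rfl⟩
    exact ⟨⟨Nat.one_le_iff_ne_zero.mpr (by positivity), Nat.mul_le_mul_right q han⟩,
      dvd_mul_left q a⟩

lemma sum_Icc_mul_ite_dvd₃ {M : Type*} [AddCommMonoid M] {q : ℕ} (hq : 0 < q) (n : ℕ)
    (f : ℕ → ℕ → ℕ → M) :
    ∑ i ∈ Icc 1 (n * q), ∑ j ∈ Icc 1 (n * q), ∑ k ∈ Icc 1 (n * q),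
        (if q ∣ i ∧ q ∣ j ∧ q ∣ k then f i j k else 0) =
      ∑ a ∈ Icc 1 n, ∑ b ∈ Icc 1 n, ∑ c ∈ Icc 1 n, f (a * q) (b * q) (c * q) := by
  simp only [ite_and, sum_ite_irrel, sum_const_zero, sum_Icc_mul_ite_dvd hq]

lemma sum_Icc_sum_Icc_ite_add_eq {M : Type*} [AddCommMonoid M] {m n : ℕ} (hm : m ≤ n + 1)
    (f : ℕ → ℕ → M) :
    ∑ j ∈ Icc 1 n, ∑ k ∈ Icc 1 n, (if j + k = m then f j k else 0) =
      ∑ j ∈ Ico 1 m, f j (m - j) := by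
  calc ∑ j ∈ Icc 1 n, ∑ k ∈ Icc 1 n, (if j + k = m then f j k else 0)
      = ∑ j ∈ Icc 1 n, if m - j ∈ Icc 1 n then f j (m - j) else 0 := by
        refine sum_congr rfl fun j _ => ?_
        rw [← sum_ite_eq]
        exact sum_congr rfl fun k hk => if_congr (by simp only [mem_Icc] at hk; omega) rfl rfl
    _ = ∑ j ∈ Ico 1 m, f j (m - j) := by
        rw [← sum_filter]
        congr 1
        ext j
        simp only [mem_filter, mem_Icc, mem_Ico]
        omega

lemma ite_not_dvd_of_dvd_add_add {R : Type*} [Ring R] {q i j k : ℕ} (h : q ∣ i + j + k) (x : R) :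
    (if ¬q ∣ i ∧ ¬q ∣ j ∧ ¬q ∣ k then x else 0) =
      x - (if q ∣ i then x else 0) - (if q ∣ j then x else 0) - (if q ∣ k then x else 0)
        + 2 * (if q ∣ i ∧ q ∣ j ∧ q ∣ k then x else 0) := by
  have hk : q ∣ i → q ∣ j → q ∣ k := fun hi hj => (Nat.dvd_add_right (dvd_add hi hj)).mp h
  have hj : q ∣ i → q ∣ k → q ∣ j := fun hi hk =>
    (Nat.dvd_add_right hi).mp ((Nat.dvd_add_left hk).mp h)
  have hi : q ∣ j → q ∣ k → q ∣ i := fun hj hk =>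
    (Nat.dvd_add_left hj).mp ((Nat.dvd_add_left hk).mp h)
  by_cases q ∣ i <;> by_cases q ∣ j <;> by_cases q ∣ k <;> simp_all
  noncomm_ring

def zpSummand (n p i j k : ℕ) : ℚ :=
  if i + j + k = n ∧ i.Coprime p ∧ j.Coprime p ∧ k.Coprime p then 1 / ((i : ℚ) * j * k) else 0

def Zp₂ (m p : ℕ) : ℚ :=
  ∑ i ∈ Ico 1 m, if (i * (m - i)).Coprime p then 1 / ((i : ℚ) * ((m - i : ℕ) : ℚ)) else 0

lemma Z_eq_Zp (n : ℕ) : Z n = Zp n n :=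
  rfl

lemma Zp_eq_sum_zpSummand (n p : ℕ) :
    Zp n p = ∑ i ∈ Icc 1 n, ∑ j ∈ Icc 1 n, ∑ k ∈ Icc 1 n, zpSummand n p i j k :=
  rfl

lemma zpSummand_swap₁₂ (n p i j k : ℕ) : zpSummand n p j i k = zpSummand n p i j k := by
  simp only [zpSummand, Nat.add_comm j i, mul_comm (j : ℚ) i, and_left_comm (a := j.Coprime p)]

lemma zpSummand_swap₂₃ (n p i j k : ℕ) : zpSummand n p i k j = zpSummand n p i j k := by
  simp only [zpSummand, Nat.add_right_comm i k j, mul_right_comm (i : ℚ) k j,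
    and_comm (a := k.Coprime p)]

lemma zpSummand_mul_of_prime {q : ℕ} (hq : q.Prime) {n : ℕ} (hqn : q ∣ n) (p i j k : ℕ) :
    zpSummand n (p * q) i j k =
      zpSummand n p i j k - (if q ∣ i then zpSummand n p i j k else 0)
        - (if q ∣ j then zpSummand n p i j k else 0) - (if q ∣ k then zpSummand n p i j k else 0)
        + 2 * (if q ∣ i ∧ q ∣ j ∧ q ∣ k then zpSummand n p i j k else 0) := by
  by_cases hsum : i + j + k = n
  · have hcop : ∀ x : ℕ, x.Coprime (p * q) ↔ x.Coprime p ∧ ¬q ∣ x := fun x => by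
      rw [Nat.coprime_mul_iff_right, Nat.coprime_comm.trans hq.coprime_iff_not_dvd]
    rw [← ite_not_dvd_of_dvd_add_add (hsum ▸ hqn)]
    simp only [zpSummand, hcop]
    split_ifs <;> first | rfl | tauto
  · simp [zpSummand, hsum]

lemma sum_ite_dvd_snd_zpSummand (s : Finset ℕ) (n p q : ℕ) :
    ∑ i ∈ s, ∑ j ∈ s, ∑ k ∈ s, (if q ∣ j then zpSummand n p i j k else 0) =
      ∑ i ∈ s, ∑ j ∈ s, ∑ k ∈ s, (if q ∣ i then zpSummand n p i j k else 0) := by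
  rw [sum_comm]
  exact sum_congr rfl fun _ _ => sum_congr rfl fun _ _ => sum_congr rfl fun _ _ => by
    rw [zpSummand_swap₁₂]

lemma sum_ite_dvd_thd_zpSummand (s : Finset ℕ) (n p q : ℕ) :
    ∑ i ∈ s, ∑ j ∈ s, ∑ k ∈ s, (if q ∣ k then zpSummand n p i j k else 0) =
      ∑ i ∈ s, ∑ j ∈ s, ∑ k ∈ s, (if q ∣ j then zpSummand n p i j k else 0) := by
  refine sum_congr rfl fun _ _ => ?_
  rw [sum_comm]
  exact sum_congr rfl fun _ _ => sum_congr rfl fun _ _ => by rw [zpSummand_swap₂₃]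

lemma sum_Icc_sum_Icc_zpSummand (n p i : ℕ) :
    ∑ j ∈ Icc 1 n, ∑ k ∈ Icc 1 n, zpSummand n p i j k =
      if i.Coprime p then 1 / (i : ℚ) * Zp₂ (n - i) p else 0 := by
  calc ∑ j ∈ Icc 1 n, ∑ k ∈ Icc 1 n, zpSummand n p i j k
      = ∑ j ∈ Icc 1 n, ∑ k ∈ Icc 1 n, if j + k = n - i then
          (if i.Coprime p ∧ j.Coprime p ∧ k.Coprime p then 1 / ((i : ℚ) * j * k) else 0)
          else 0 := by
        refine sum_congr rfl fun j hj => sum_congr rfl fun k _ => ?_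
        rw [zpSummand, ← ite_and]
        exact if_congr (and_congr_left' (by simp only [mem_Icc] at hj; omega)) rfl rfl
    _ = ∑ j ∈ Ico 1 (n - i), if i.Coprime p ∧ j.Coprime p ∧ (n - i - j).Coprime p then
          1 / ((i : ℚ) * j * ((n - i - j : ℕ) : ℚ)) else 0 :=
        sum_Icc_sum_Icc_ite_add_eq (by omega) _
    _ = _ := by
        split_ifs with hi
        · rw [Zp₂, mul_sum]
          refine sum_congr rfl fun j _ => ?_
          simp only [Nat.coprime_mul_iff_left, mul_ite, mul_zero]
          exact if_congr (and_iff_right hi) (by ring) rfl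
        · simp [hi]

lemma sum_ite_dvd_fst_zpSummand {p q : ℕ} (hp : p.Prime) (hq : 0 < q) (hqp : q.Coprime p) :
    ∑ i ∈ Icc 1 (p * q), ∑ j ∈ Icc 1 (p * q), ∑ k ∈ Icc 1 (p * q),
        (if q ∣ i then zpSummand (p * q) p i j k else 0) =
      ∑ a ∈ Ico 1 p, 1 / (((p - a : ℕ) : ℚ) * q) * Zp₂ (a * q) p := by
  have hcop : ∀ a ∈ Icc 1 p, (a * q).Coprime p ↔ a ∈ Ico 1 p := fun a ha => by
    obtain ⟨ha1, hap⟩ := mem_Icc.1 ha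
    rw [Nat.coprime_mul_iff_left, and_iff_left hqp, Nat.coprime_comm, hp.coprime_iff_not_dvd,
      mem_Ico]
    exact ⟨fun h => ⟨ha1, lt_of_le_of_ne hap (by rintro rfl; exact h dvd_rfl)⟩,
      fun h => Nat.not_dvd_of_pos_of_lt ha1 h.2⟩
  calc ∑ i ∈ Icc 1 (p * q), ∑ j ∈ Icc 1 (p * q), ∑ k ∈ Icc 1 (p * q),
        (if q ∣ i then zpSummand (p * q) p i j k else 0)
      = ∑ a ∈ Icc 1 p, ∑ j ∈ Icc 1 (p * q), ∑ k ∈ Icc 1 (p * q),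
          zpSummand (p * q) p (a * q) j k := by
        simp only [sum_ite_irrel, sum_const_zero, sum_Icc_mul_ite_dvd hq]
    _ = ∑ a ∈ Icc 1 p, if a ∈ Ico 1 p then 1 / ((a : ℚ) * q) * Zp₂ ((p - a) * q) p else 0 := by
        refine sum_congr rfl fun a ha => ?_
        rw [sum_Icc_sum_Icc_zpSummand, ← Nat.sub_mul]
        exact if_congr (hcop a ha) (by push_cast; rfl) rfl
    _ = ∑ a ∈ Ico 1 p, 1 / ((a : ℚ) * q) * Zp₂ ((p - a) * q) p := by
        rw [sum_ite_mem, inter_eq_right.mpr Ico_subset_Icc_self]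
    _ = ∑ a ∈ Ico 1 p, 1 / (((p - a : ℕ) : ℚ) * q) * Zp₂ ((p - (p - a)) * q) p := by
        have h := sum_Ico_reflect (fun a => 1 / ((a : ℚ) * q) * Zp₂ ((p - a) * q) p) 1 p.le_succ
        rw [Nat.add_sub_cancel_left, Nat.add_sub_cancel] at h
        exact h.symm
    _ = _ := sum_congr rfl fun a ha => by rw [Nat.sub_sub_self (mem_Ico.1 ha).2.le]

lemma zpSummand_mul_mul_mul {q : ℕ} (hq : 0 < q) {p : ℕ} (hqp : q.Coprime p) (n a b c : ℕ) :
    zpSummand (n * q) p (a * q) (b * q) (c * q) =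
      if a + b + c = n ∧ a.Coprime p ∧ b.Coprime p ∧ c.Coprime p then
        1 / (((a : ℚ) * q) * ((b : ℚ) * q) * ((c : ℚ) * q)) else 0 := by
  have hsum : a * q + b * q + c * q = n * q ↔ a + b + c = n := by
    rw [← add_mul, ← add_mul, Nat.mul_left_inj hq.ne']
  have hcop : ∀ x, (x * q).Coprime p ↔ x.Coprime p := fun x => by
    rw [Nat.coprime_mul_iff_left, and_iff_left hqp]
  simp only [zpSummand, hsum, hcop]
  push_cast
  rfl

theorem Z_pq_decomposition_general (p q : ℕ) (hp : p.Prime) (hq : q.Prime) (hpq : p ≠ q) :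
    Z (p * q) =
      Zp (p * q) p
        - 3 * ∑ a ∈ Finset.Ico 1 p, (1 / (((p - a : ℕ) : ℚ) * (q : ℚ))) *
            ∑ i ∈ Finset.Ico 1 (a * q),
              (if Nat.Coprime (i * (a * q - i)) p then 1 / ((i : ℚ) * ((a * q - i : ℕ) : ℚ))
               else 0)
        + 2 * ∑ a ∈ Finset.Icc 1 p, ∑ b ∈ Finset.Icc 1 p, ∑ c ∈ Finset.Icc 1 p,
            (if a + b + c = p ∧ Nat.Coprime a p ∧ Nat.Coprime b p ∧ Nat.Coprime c p then
              1 / (((a : ℚ) * q) * ((b : ℚ) * q) * ((c : ℚ) * q))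
             else 0) := by
  have hqp : q.Coprime p := (Nat.coprime_primes hq hp).mpr hpq.symm
  rw [Z_eq_Zp]
  simp only [Zp_eq_sum_zpSummand, zpSummand_mul_of_prime hq (dvd_mul_left q p), sum_add_distrib,
    sum_sub_distrib, ← mul_sum]
  rw [sum_ite_dvd_thd_zpSummand, sum_ite_dvd_snd_zpSummand,
    sum_ite_dvd_fst_zpSummand hp hq.pos hqp, sum_Icc_mul_ite_dvd₃ hq.pos]
  simp only [zpSummand_mul_mul_mul hq.pos hqp, Zp₂]
  ring

theorem Z_pq_decomposition (p q : ℕ) (hp : p.Prime) (hq : q.Prime) (hp2 : p ≠ 2) (hq2 : q ≠ 2)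
    (hpq : p ≠ q) :
    Z (p * q) =
      Zp (p * q) p
        - 3 * ∑ a ∈ Finset.Ico 1 p, (1 / (((p - a : ℕ) : ℚ) * (q : ℚ))) *
            ∑ i ∈ Finset.Ico 1 (a * q),
              (if Nat.Coprime (i * (a * q - i)) p then 1 / ((i : ℚ) * ((a * q - i : ℕ) : ℚ))
               else 0)
        + 2 * ∑ a ∈ Finset.Icc 1 p, ∑ b ∈ Finset.Icc 1 p, ∑ c ∈ Finset.Icc 1 p,
            (if a + b + c = p ∧ Nat.Coprime a p ∧ Nat.Coprime b p ∧ Nat.Coprime c p then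
              1 / (((a : ℚ) * q) * ((b : ℚ) * q) * ((c : ℚ) * q))
             else 0) :=
  Z_pq_decomposition_general p q hp hq hpq
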